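/- arXiv:1406.7287 — 6 statements merged into one kernel-verified Lean document; each statement's English description precedes it below -/
import Mathlib

section
/- There exists ε₀ > 0 such that for every ε with 0 ≤ ε ≤ ε₀ and every X ∈ ℝ^m × ℝ^n × ℝ^n, the matrix γ(X) − ε κ(X) is invertible. -/
/-!
Since `Ĵ_f(y) = D¹ · J_f(y) · diag c`, the matrix `γ(X) - ε κ(X)` is block upper triangular with
diagonal blocks `D¹ (1 - ε J_f(y) diag c)` and `[[0, -(Γ/Ω²) D²], [Γ D², (Γ²/Ω²) D²]]`. The second
is invertible because its off-diagonal blocks are. The entries of `J_f(y) diag c` are bounded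
uniformly in `y`, so for small `ε` the matrix `1 - ε J_f(y) diag c` is strictly diagonally
dominant, hence invertible by Gershgorin.
-/

open scoped Matrix.Norms.L2Operator

noncomputable section

abbrev Idx (m n : ℕ) := Fin m ⊕ (Fin n ⊕ Fin n)

/-- The matrix `γ(X)` (which depends only on the `y`-component of `X`). -/
def gammaMat (m n : ℕ) (c : Fin m → ℝ) (k : Fin n → ℝ) (Γ Ω : ℝ)
    (g : Fin m → Fin n → (Fin m → ℝ) → ℝ) (y : Fin m → ℝ) :
    Matrix (Idx m n) (Idx m n) ℝ :=
  Matrix.of fun i j =>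
    match i, j with
    | .inl i, .inl j => if i = j then 1 / c i else 0
    | .inl i, .inr (.inl j) => -(g i j y / c i)
    | .inl _, .inr (.inr _) => 0
    | .inr (.inl _), .inl _ => 0
    | .inr (.inl _), .inr (.inl _) => 0
    | .inr (.inl i), .inr (.inr j) => if i = j then -(Γ / Ω ^ 2) * (1 / k i) else 0
    | .inr (.inr _), .inl _ => 0
    | .inr (.inr i), .inr (.inl j) => if i = j then Γ * (1 / k i) else 0
    | .inr (.inr i), .inr (.inr j) => if i = j then (Γ ^ 2 / Ω ^ 2) * (1 / k i) else 0

/-- The matrix `κ(X)` (which depends only on the `y`-component of `X`). -/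
def kappaMat (m n : ℕ) (c : Fin m → ℝ) (f : Fin m → (Fin m → ℝ) → ℝ) (y : Fin m → ℝ) :
    Matrix (Idx m n) (Idx m n) ℝ :=
  Matrix.of fun i j =>
    match i, j with
    | .inl i, .inl j => (c j / c i) * fderiv ℝ (f i) y (Pi.single j 1)
    | _, _ => (0 : ℝ)


namespace Matrix

variable {n 𝕜 : Type*} [Fintype n] [DecidableEq n]

theorem isUnit_diagonal_of_ne_zero {α : Type*} [Field α] {v : n → α} (hv : ∀ i, v i ≠ 0) :
    IsUnit (diagonal v) :=
  isUnit_diagonal.mpr (Pi.isUnit_iff.mpr fun i => (hv i).isUnit)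

theorem isUnit_fromBlocks_zero₁₁ {α : Type*} [CommRing α] {B C D : Matrix n n α}
    (hB : IsUnit B) (hC : IsUnit C) : IsUnit (fromBlocks 0 B C D) := by
  have hswap : (fromBlocks 0 1 1 0 : Matrix (n ⊕ n) (n ⊕ n) α) * fromBlocks 0 1 1 0 = 1 := by
    simp [fromBlocks_multiply, fromBlocks_one]
  have hfactor : fromBlocks 0 B C D = fromBlocks 0 1 1 0 * fromBlocks C D 0 B := by
    simp [fromBlocks_multiply]
  rw [hfactor]
  exact (IsUnit.of_mul_eq_one _ hswap).mul (isUnit_fromBlocks_zero₂₁.mpr ⟨hC, hB⟩)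

theorem isUnit_one_sub_smul_of_norm_le [NormedField 𝕜] {E : Matrix n n 𝕜} {C : ℝ} {ε : 𝕜}
    (hE : ∀ i j, ‖E i j‖ ≤ C) (hε : ‖ε‖ * (Fintype.card n * C) < 1) :
    IsUnit (1 - ε • E) := by
  rw [isUnit_iff_isUnit_det, isUnit_iff_ne_zero]
  refine det_ne_zero_of_sum_row_lt_diag fun k => ?_
  have hrow : ‖ε‖ * ∑ j, ‖E k j‖ < 1 :=
    (mul_le_mul_of_nonneg_left
      ((Finset.sum_le_sum fun j _ => hE k j).trans_eq (by simp)) (norm_nonneg ε)).trans_lt hε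
  have hoff : ∑ j ∈ Finset.univ.erase k, ‖(1 - ε • E) k j‖
      = ‖ε‖ * ∑ j ∈ Finset.univ.erase k, ‖E k j‖ := by
    rw [Finset.mul_sum]
    refine Finset.sum_congr rfl fun j hj => ?_
    simp [one_apply_ne' (Finset.ne_of_mem_erase hj), norm_mul]
  calc ∑ j ∈ Finset.univ.erase k, ‖(1 - ε • E) k j‖
      = ‖ε‖ * ∑ j, ‖E k j‖ - ‖ε‖ * ‖E k k‖ := by
        rw [hoff, ← Finset.sum_erase_add _ _ (Finset.mem_univ k)]; ring
    _ < 1 - ‖ε * E k k‖ := by rw [norm_mul]; linarith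
    _ ≤ ‖(1 - ε • E) k k‖ := by simpa using norm_sub_norm_le (1 : 𝕜) (ε * E k k)

end Matrix

theorem exists_pos_forall_isUnit_one_sub_smul {α ι : Type*} [Fintype ι] [DecidableEq ι]
    (E : α → Matrix ι ι ℝ) {C : ℝ} (hE : ∀ y i j, |E y i j| ≤ C) :
    ∃ ε₀ > (0 : ℝ), ∀ ε : ℝ, 0 ≤ ε → ε ≤ ε₀ → ∀ y, IsUnit (1 - ε • E y) := by
  set K := Fintype.card ι * |C|
  refine ⟨1 / (K + 1), by positivity, fun ε hε hεε₀ y => ?_⟩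
  refine Matrix.isUnit_one_sub_smul_of_norm_le (C := |C|)
    (fun i j => (hE y i j).trans (le_abs_self C)) ?_
  rw [Real.norm_of_nonneg hε]
  calc ε * K ≤ 1 / (K + 1) * K := by gcongr
    _ < 1 := by rw [div_mul_eq_mul_div, one_mul, div_lt_one (by positivity)]; linarith

def jacobian {m : ℕ} (f : Fin m → (Fin m → ℝ) → ℝ) (y : Fin m → ℝ) : Matrix (Fin m) (Fin m) ℝ :=
  Matrix.of fun i j => fderiv ℝ (f i) y (Pi.single j 1)

theorem exists_abs_jacobian_mul_diagonal_le {m : ℕ} (c : Fin m → ℝ) {f : Fin m → (Fin m → ℝ) → ℝ}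
    (hf : ∀ i, ∃ C, ∀ y, ‖fderiv ℝ (f i) y‖ ≤ C) :
    ∃ C, ∀ y i j, |(jacobian f y * Matrix.diagonal c) i j| ≤ C := by
  choose Cf hCf using hf
  obtain ⟨C, hC⟩ := Finite.exists_le fun p : Fin m × Fin m => Cf p.1 * |c p.2|
  refine ⟨C, fun y i j => ?_⟩
  have hentry : |jacobian f y i j| ≤ Cf i := by
    have := (fderiv ℝ (f i) y).le_opNorm (Pi.single j 1)
    rw [Pi.norm_single, norm_one, mul_one] at this
    exact this.trans (hCf i y)
  rw [Matrix.mul_diagonal, abs_mul]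
  exact (mul_le_mul_of_nonneg_right hentry (abs_nonneg _)).trans (hC (i, j))

theorem gammaMat_sub_smul_kappaMat_eq_fromBlocks (m n : ℕ) (c : Fin m → ℝ) (k : Fin n → ℝ)
    (Γ Ω : ℝ) (g : Fin m → Fin n → (Fin m → ℝ) → ℝ) (f : Fin m → (Fin m → ℝ) → ℝ)
    (y : Fin m → ℝ) (ε : ℝ) :
    ∃ B, gammaMat m n c k Γ Ω g y - ε • kappaMat m n c f y =
      Matrix.fromBlocks
        (Matrix.diagonal (fun i => 1 / c i) * (1 - ε • (jacobian f y * Matrix.diagonal c))) B 0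
        (Matrix.fromBlocks 0 (Matrix.diagonal fun i => -(Γ / Ω ^ 2) * (1 / k i))
          (Matrix.diagonal fun i => Γ * (1 / k i))
          (Matrix.diagonal fun i => Γ ^ 2 / Ω ^ 2 * (1 / k i))) := by
  refine ⟨Matrix.of fun i => Sum.elim (fun j => -(g i j y / c i)) 0, ?_⟩
  ext (i | i | i) (j | j | j) <;>
    simp [gammaMat, kappaMat, jacobian, Matrix.diagonal_apply, Matrix.one_apply]
  split_ifs <;> ring

theorem statement0_general (m n : ℕ)
    (c : Fin m → ℝ) (hc : ∀ i, 0 < c i) (k : Fin n → ℝ) (hk : ∀ j, 0 < k j)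
    (Γ Ω : ℝ) (hΓ : 0 < Γ) (hΩ : 0 < Ω)
    (g : Fin m → Fin n → (Fin m → ℝ) → ℝ)
    (f : Fin m → (Fin m → ℝ) → ℝ)
    (hf_deriv_bdd : ∀ i, ∃ C, ∀ y, ‖fderiv ℝ (f i) y‖ ≤ C) :
    ∃ ε₀ > (0:ℝ), ∀ ε : ℝ, 0 ≤ ε → ε ≤ ε₀ →
      ∀ X : (Fin m → ℝ) × (Fin n → ℝ) × (Fin n → ℝ),
        IsUnit (gammaMat m n c k Γ Ω g X.1 - ε • kappaMat m n c f X.1) := by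
  obtain ⟨C, hC⟩ := exists_abs_jacobian_mul_diagonal_le c hf_deriv_bdd
  obtain ⟨ε₀, hε₀, hunit⟩ := exists_pos_forall_isUnit_one_sub_smul _ hC
  refine ⟨ε₀, hε₀, fun ε hε hεε₀ X => ?_⟩
  obtain ⟨B, hB⟩ := gammaMat_sub_smul_kappaMat_eq_fromBlocks m n c k Γ Ω g f X.1 ε
  rw [hB, Matrix.isUnit_fromBlocks_zero₂₁]
  refine ⟨(Matrix.isUnit_diagonal_of_ne_zero fun i => ?_).mul (hunit ε hε hεε₀ X.1),
    Matrix.isUnit_fromBlocks_zero₁₁ (Matrix.isUnit_diagonal_of_ne_zero fun i => ?_)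
      (Matrix.isUnit_diagonal_of_ne_zero fun i => ?_)⟩
  · simp [(hc i).ne']
  · simp [hΓ.ne', hΩ.ne', (hk i).ne']
  · simp [hΓ.ne', (hk i).ne']

theorem statement0 (m n : ℕ) (hm : 0 < m) (hn : 0 < n)
    (c : Fin m → ℝ) (hc : ∀ i, 0 < c i) (k : Fin n → ℝ) (hk : ∀ j, 0 < k j)
    (Γ Ω : ℝ) (hΓ : 0 < Γ) (hΩ : 0 < Ω)
    (g : Fin m → Fin n → (Fin m → ℝ) → ℝ)
    (hg_diff : ∀ i j, Differentiable ℝ (g i j))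
    (hg_deriv_cont : ∀ i j, Continuous (fderiv ℝ (g i j)))
    (hg_bdd : ∀ i j, ∃ C, ∀ y, |g i j y| ≤ C)
    (hg_deriv_bdd : ∀ i j, ∃ C, ∀ y, ‖fderiv ℝ (g i j) y‖ ≤ C)
    (f : Fin m → (Fin m → ℝ) → ℝ)
    (hf_diff : ∀ i, Differentiable ℝ (f i))
    (hf_deriv_cont : ∀ i, Continuous (fderiv ℝ (f i)))
    (hf_deriv_diff : ∀ i, Differentiable ℝ (fderiv ℝ (f i)))
    (hf_bdd : ∀ i, ∃ C, ∀ y, |f i y| ≤ C)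
    (hf_deriv_bdd : ∀ i, ∃ C, ∀ y, ‖fderiv ℝ (f i) y‖ ≤ C)
    (hf_deriv2_bdd : ∀ i, ∃ C, ∀ y, ‖fderiv ℝ (fderiv ℝ (f i)) y‖ ≤ C) :
    ∃ ε₀ > (0:ℝ), ∀ ε : ℝ, 0 ≤ ε → ε ≤ ε₀ →
      ∀ X : (Fin m → ℝ) × (Fin n → ℝ) × (Fin n → ℝ),
        IsUnit (gammaMat m n c k Γ Ω g X.1 - ε • kappaMat m n c f X.1) :=
  statement0_general m n c hc k hk Γ Ω hΓ hΩ g f hf_deriv_bdd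
end
end

section
/- There exist ε₀ > 0 and C₁ > 0 such that for every ε with 0 ≤ ε ≤ ε₀ and every X ∈ ℝ^m × ℝ^n × ℝ^n, the matrix γ(X) − ε κ(X) is invertible and ‖(γ(X) − ε κ(X))^{-1}‖ < C₁. -/
open scoped Matrix.Norms.L2Operator

noncomputable section

/-!
With respect to the splitting `y | (ξ, ζ)`, `γ(y)` is block upper triangular with constant
invertible diagonal blocks, so its inverse is explicit and depends on `y` only through the entries
`g^{ij}(y) k_j` and `g^{ij}(y) k_j / Γ`. Boundedness of `g` therefore bounds `‖γ(y)⁻¹‖` uniformly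
in `y`, and boundedness of `∇f` bounds `‖κ(y)‖`. A Neumann series then keeps `γ(y) - ε κ(y)`
invertible, with a uniformly bounded inverse, as long as `ε ‖γ(y)⁻¹‖ ‖κ(y)‖ ≤ 1/2`.
-/

theorem Matrix.exists_l2_opNorm_le_of_forall_entry_bounded {𝕜 α p q : Type*} [RCLike 𝕜]
    [Fintype p] [Fintype q] [DecidableEq p] [DecidableEq q]
    (A : α → Matrix p q 𝕜) (h : ∀ i j, ∃ C, ∀ a, ‖A a i j‖ ≤ C) :
    ∃ C, ∀ a, ‖A a‖ ≤ C := by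
  choose C hC using h
  refine ⟨∑ i, ∑ j, C i j * ‖Matrix.single i j (1 : 𝕜)‖, fun a => ?_⟩
  calc ‖A a‖ = ‖∑ i, ∑ j, A a i j • Matrix.single i j (1 : 𝕜)‖ := by
        simp only [Matrix.smul_single, smul_eq_mul, mul_one, ← Matrix.matrix_eq_sum_single]
    _ ≤ ∑ i, ∑ j, ‖A a i j • Matrix.single i j (1 : 𝕜)‖ :=
        (norm_sum_le _ _).trans (Finset.sum_le_sum fun i _ => norm_sum_le _ _)
    _ ≤ ∑ i, ∑ j, C i j * ‖Matrix.single i j (1 : 𝕜)‖ := by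
        gcongr with i _ j _
        exact (norm_smul_le _ _).trans (by gcongr; exact hC i j a)

theorem Units.norm_inverse_add_le {R : Type*} [NormedRing R] [HasSummableGeomSeries R]
    (x : Rˣ) {t : R} (h : ‖(↑x⁻¹ : R)‖ * ‖t‖ ≤ 1 / 2) :
    IsUnit ((x : R) + t) ∧ ‖Ring.inverse ((x : R) + t)‖ ≤ (‖(1 : R)‖ + 1) * ‖(↑x⁻¹ : R)‖ := by
  set s : R := -(↑x⁻¹ * t)
  have hs : ‖s‖ ≤ 1 / 2 := by rw [norm_neg]; exact (norm_mul_le _ _).trans h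
  have hs1 : ‖s‖ < 1 := by linarith
  set w := Units.oneSub s hs1
  have hxt : (x : R) + t = ↑(x * w) := by simp [w, s, mul_add]
  have hw : ‖(↑w⁻¹ : R)‖ ≤ ‖(1 : R)‖ + 1 := by
    have hinv : (1 - ‖s‖)⁻¹ ≤ 2 := by rw [inv_le_comm₀ (by linarith) two_pos]; linarith
    calc ‖(↑w⁻¹ : R)‖ = ‖∑' n, s ^ n‖ := rfl
      _ ≤ ‖(1 : R)‖ - 1 + (1 - ‖s‖)⁻¹ := tsum_geometric_le_of_norm_lt_one s hs1
      _ ≤ ‖(1 : R)‖ + 1 := by linarith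
  refine ⟨hxt ▸ (x * w).isUnit, ?_⟩
  rw [hxt, Ring.inverse_unit, mul_inv_rev, Units.val_mul]
  exact (norm_mul_le _ _).trans (mul_le_mul_of_nonneg_right hw (norm_nonneg _))

theorem exists_norm_inverse_sub_smul_lt {R α : Type*} [NormedRing R] [NormedSpace ℝ R]
    [HasSummableGeomSeries R] (u : α → Rˣ) (t : α → R) {M K : ℝ}
    (hu : ∀ a, ‖(↑(u a)⁻¹ : R)‖ ≤ M) (ht : ∀ a, ‖t a‖ ≤ K) :
    ∃ ε₀ > (0 : ℝ), ∃ C > (0 : ℝ), ∀ ε : ℝ, 0 ≤ ε → ε ≤ ε₀ → ∀ a,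
      IsUnit ((u a : R) - ε • t a) ∧ ‖Ring.inverse ((u a : R) - ε • t a)‖ < C := by
  set M' := max M 1
  set K' := max K 1
  have hM' : 0 < M' := lt_max_of_lt_right one_pos
  have hK' : 0 < K' := lt_max_of_lt_right one_pos
  refine ⟨1 / (2 * M' * K'), by positivity, (‖(1 : R)‖ + 1) * M' + 1, by positivity,
    fun ε hε0 hε a => ?_⟩
  have hua : ‖(↑(u a)⁻¹ : R)‖ ≤ M' := (hu a).trans (le_max_left _ _)
  have hsmall : ‖(↑(u a)⁻¹ : R)‖ * ‖-(ε • t a)‖ ≤ 1 / 2 :=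
    calc ‖(↑(u a)⁻¹ : R)‖ * ‖-(ε • t a)‖ = ‖(↑(u a)⁻¹ : R)‖ * (ε * ‖t a‖) := by
          rw [norm_neg, norm_smul, Real.norm_of_nonneg hε0]
      _ ≤ M' * (1 / (2 * M' * K') * K') := by
          gcongr
          exact (ht a).trans (le_max_left _ _)
      _ = 1 / 2 := by field_simp
  obtain ⟨hunit, hbound⟩ := (u a).norm_inverse_add_le hsmall
  rw [← sub_eq_add_neg] at hunit hbound
  refine ⟨hunit, hbound.trans_lt ?_⟩
  calc (‖(1 : R)‖ + 1) * ‖(↑(u a)⁻¹ : R)‖ ≤ (‖(1 : R)‖ + 1) * M' := by gcongr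
    _ < (‖(1 : R)‖ + 1) * M' + 1 := lt_add_one _

section Gamma

variable (m n : ℕ) (c : Fin m → ℝ) (k : Fin n → ℝ) (Γ Ω : ℝ) (g : Fin m → Fin n → (Fin m → ℝ) → ℝ)

def gammaInv (y : Fin m → ℝ) : Matrix (Idx m n) (Idx m n) ℝ :=
  Matrix.of fun i j =>
    match i, j with
    | .inl i, .inl j => if i = j then c i else 0
    | .inl i, .inr (.inl j) => g i j y * k j
    | .inl i, .inr (.inr j) => g i j y * k j / Γ
    | .inr (.inl _), .inl _ => 0
    | .inr (.inl i), .inr (.inl j) => if i = j then k i else 0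
    | .inr (.inl i), .inr (.inr j) => if i = j then k i / Γ else 0
    | .inr (.inr _), .inl _ => 0
    | .inr (.inr i), .inr (.inl j) => if i = j then -(Ω ^ 2 / Γ) * k i else 0
    | .inr (.inr _), .inr (.inr _) => 0

variable {c k Γ Ω}

theorem gammaMat_mul_gammaInv (hc : ∀ i, c i ≠ 0) (hk : ∀ j, k j ≠ 0) (hΓ : Γ ≠ 0)
    (hΩ : Ω ≠ 0) (y : Fin m → ℝ) :
    gammaMat m n c k Γ Ω g y * gammaInv m n c k Γ Ω g y = 1 := by
  ext (i | i | i) (j | j | j) <;>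
    simp only [gammaMat, gammaInv, Matrix.mul_apply, Matrix.of_apply, Matrix.one_apply,
      Fintype.sum_sum_type, Finset.sum_ite_eq, Finset.sum_ite_eq', Finset.sum_const_zero,
      Finset.mem_univ, Sum.inl.injEq, Sum.inr.injEq, reduceCtorEq, ↓reduceIte, ite_mul, mul_ite,
      ite_self, zero_mul, mul_zero, add_zero, zero_add, mul_neg, neg_mul, neg_zero, one_div] <;>
    (try split_ifs) <;> subst_vars <;> field_simp [hc, hk] <;> ring

def gammaUnit (hc : ∀ i, c i ≠ 0) (hk : ∀ j, k j ≠ 0) (hΓ : Γ ≠ 0) (hΩ : Ω ≠ 0)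
    (y : Fin m → ℝ) : (Matrix (Idx m n) (Idx m n) ℝ)ˣ where
  val := gammaMat m n c k Γ Ω g y
  inv := gammaInv m n c k Γ Ω g y
  val_inv := gammaMat_mul_gammaInv m n g hc hk hΓ hΩ y
  inv_val := mul_eq_one_comm.mp (gammaMat_mul_gammaInv m n g hc hk hΓ hΩ y)

variable {m n g}

theorem gammaInv_entry_bounded (hg : ∀ i j, ∃ C, ∀ y, |g i j y| ≤ C) (i j : Idx m n) :
    ∃ C, ∀ y, ‖gammaInv m n c k Γ Ω g y i j‖ ≤ C := by
  rcases i with i | i | i <;> rcases j with j | j | j <;>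
    simp only [gammaInv, Matrix.of_apply]
  case inl.inr.inl =>
    obtain ⟨C, hC⟩ := hg i j
    exact ⟨C * ‖k j‖, fun y => by rw [norm_mul, Real.norm_eq_abs]; gcongr; exact hC y⟩
  case inl.inr.inr =>
    obtain ⟨C, hC⟩ := hg i j
    refine ⟨C * ‖k j / Γ‖, fun y => ?_⟩
    rw [mul_div_assoc, norm_mul, Real.norm_eq_abs]
    gcongr
    exact hC y
  all_goals exact ⟨_, fun _ => le_rfl⟩

end Gamma

theorem kappaMat_entry_bounded {m n : ℕ} {c : Fin m → ℝ} {f : Fin m → (Fin m → ℝ) → ℝ}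
    (hf : ∀ i, ∃ C, ∀ y, ‖fderiv ℝ (f i) y‖ ≤ C) (i j : Idx m n) :
    ∃ C, ∀ y, ‖kappaMat m n c f y i j‖ ≤ C := by
  rcases i with i | _ <;> rcases j with j | _
  case inl.inl =>
    obtain ⟨C, hC⟩ := hf i
    refine ⟨‖c j / c i‖ * C, fun y => ?_⟩
    have hpartial : ‖fderiv ℝ (f i) y (Pi.single j 1)‖ ≤ ‖fderiv ℝ (f i) y‖ := by
      simpa [Pi.norm_single] using (fderiv ℝ (f i) y).le_opNorm (Pi.single j 1)
    simp only [kappaMat, Matrix.of_apply, norm_mul]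
    gcongr
    exact hpartial.trans (hC y)
  all_goals exact ⟨0, fun y => by simp [kappaMat]⟩

theorem statement1_general (m n : ℕ)
    (c : Fin m → ℝ) (hc : ∀ i, 0 < c i) (k : Fin n → ℝ) (hk : ∀ j, 0 < k j)
    (Γ Ω : ℝ) (hΓ : 0 < Γ) (hΩ : 0 < Ω)
    (g : Fin m → Fin n → (Fin m → ℝ) → ℝ)
    (hg_bdd : ∀ i j, ∃ C, ∀ y, |g i j y| ≤ C)
    (f : Fin m → (Fin m → ℝ) → ℝ)
    (hf_deriv_bdd : ∀ i, ∃ C, ∀ y, ‖fderiv ℝ (f i) y‖ ≤ C) :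
    ∃ ε₀ > (0:ℝ), ∃ C₁ > (0:ℝ), ∀ ε : ℝ, 0 ≤ ε → ε ≤ ε₀ →
      ∀ X : (Fin m → ℝ) × (Fin n → ℝ) × (Fin n → ℝ),
        IsUnit (gammaMat m n c k Γ Ω g X.1 - ε • kappaMat m n c f X.1) ∧
          ‖(gammaMat m n c k Γ Ω g X.1 - ε • kappaMat m n c f X.1)⁻¹‖ < C₁ := by
  obtain ⟨M, hM⟩ := Matrix.exists_l2_opNorm_le_of_forall_entry_bounded _
    (gammaInv_entry_bounded (c := c) (k := k) (Γ := Γ) (Ω := Ω) hg_bdd)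
  obtain ⟨K, hK⟩ := Matrix.exists_l2_opNorm_le_of_forall_entry_bounded _
    (kappaMat_entry_bounded (n := n) (c := c) hf_deriv_bdd)
  obtain ⟨ε₀, hε₀, C₁, hC₁, hinv⟩ := exists_norm_inverse_sub_smul_lt
    (gammaUnit m n g (fun i => (hc i).ne') (fun j => (hk j).ne') hΓ.ne' hΩ.ne')
    (kappaMat m n c f) hM hK
  refine ⟨ε₀, hε₀, C₁, hC₁, fun ε hε0 hε X => ?_⟩
  rw [Matrix.nonsing_inv_eq_ringInverse]
  exact hinv ε hε0 hε X.1

theorem statement1 (m n : ℕ) (hm : 0 < m) (hn : 0 < n)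
    (c : Fin m → ℝ) (hc : ∀ i, 0 < c i) (k : Fin n → ℝ) (hk : ∀ j, 0 < k j)
    (Γ Ω : ℝ) (hΓ : 0 < Γ) (hΩ : 0 < Ω)
    (g : Fin m → Fin n → (Fin m → ℝ) → ℝ)
    (hg_diff : ∀ i j, Differentiable ℝ (g i j))
    (hg_deriv_cont : ∀ i j, Continuous (fderiv ℝ (g i j)))
    (hg_bdd : ∀ i j, ∃ C, ∀ y, |g i j y| ≤ C)
    (hg_deriv_bdd : ∀ i j, ∃ C, ∀ y, ‖fderiv ℝ (g i j) y‖ ≤ C)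
    (f : Fin m → (Fin m → ℝ) → ℝ)
    (hf_diff : ∀ i, Differentiable ℝ (f i))
    (hf_deriv_cont : ∀ i, Continuous (fderiv ℝ (f i)))
    (hf_deriv_diff : ∀ i, Differentiable ℝ (fderiv ℝ (f i)))
    (hf_bdd : ∀ i, ∃ C, ∀ y, |f i y| ≤ C)
    (hf_deriv_bdd : ∀ i, ∃ C, ∀ y, ‖fderiv ℝ (f i) y‖ ≤ C)
    (hf_deriv2_bdd : ∀ i, ∃ C, ∀ y, ‖fderiv ℝ (fderiv ℝ (f i)) y‖ ≤ C) :
    ∃ ε₀ > (0:ℝ), ∃ C₁ > (0:ℝ), ∀ ε : ℝ, 0 ≤ ε → ε ≤ ε₀ →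
      ∀ X : (Fin m → ℝ) × (Fin n → ℝ) × (Fin n → ℝ),
        IsUnit (gammaMat m n c k Γ Ω g X.1 - ε • kappaMat m n c f X.1) ∧
          ‖(gammaMat m n c k Γ Ω g X.1 - ε • kappaMat m n c f X.1)⁻¹‖ < C₁ :=
  statement1_general m n c hc k hk Γ Ω hΓ hΩ g hg_bdd f hf_deriv_bdd
end
end

section
/- For every X ∈ ℝ^m × ℝ^n × ℝ^n, the characteristic polynomial of γ(X) equals ∏_{i=1}^m (λ − 1/c_i) · ∏_{j=1}^n (λ² − (Γ²/(k_j Ω²)) λ + Γ²/(k_j² Ω²)). In particular, the eigenvalues of γ(X) are 1/c_i (i = 1, …, m) and (Γ²/(2 k_j Ω²))(1 ± √(1 − 4Ω²/Γ²)) (j = 1, …, n), and they do not depend on X. -/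
open scoped Matrix.Norms.L2Operator

noncomputable section

/-! `γ(X)` is block upper triangular with diagonal blocks `D¹` and
`[[0, -(Γ/Ω²) D²], [Γ D², (Γ²/Ω²) D²]]`, so the coupling `ĝ(y)`, the only place where `X` enters,
does not affect the characteristic polynomial. The second block has diagonal blocks, so after
interleaving coordinates it is block diagonal with the `2 × 2` blocks
`[[0, -Γ/(Ω² k_j)], [Γ/k_j, Γ²/(Ω² k_j)]]`, each contributing `X² - tr·X + det`. Over `ℂ` this
quadratic has the roots `a_j (1 ± s)` with `a_j = Γ²/(2 k_j Ω²)` and `s² = 1 - 4Ω²/Γ²`. -/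

open Polynomial

def Equiv.sumSelfEquivFinTwoProd (ι : Type*) : ι ⊕ ι ≃ Fin 2 × ι :=
  (Equiv.boolProdEquivSum ι).symm.trans (finTwoEquiv.symm.prodCongr (Equiv.refl ι))

namespace Matrix

variable {R ι o : Type*} [CommRing R] [DecidableEq ι]

theorem reindex_fromBlocks_diagonal (a b c d : ι → R) :
    reindex (Equiv.sumSelfEquivFinTwoProd ι) (Equiv.sumSelfEquivFinTwoProd ι)
        (fromBlocks (diagonal a) (diagonal b) (diagonal c) (diagonal d)) =
      blockDiagonal fun j => !![a j, b j; c j, d j] := by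
  ext ⟨p, i⟩ ⟨q, j⟩
  fin_cases p <;> fin_cases q <;>
    simp [Equiv.sumSelfEquivFinTwoProd, finTwoEquiv, blockDiagonal_apply, diagonal_apply]

variable [Fintype ι]

theorem charmatrix_blockDiagonal [Fintype o] [DecidableEq o] (M : o → Matrix ι ι R) :
    charmatrix (blockDiagonal M) = blockDiagonal fun j => charmatrix (M j) := by
  ext ⟨a, i⟩ ⟨b, j⟩
  by_cases hij : i = j <;> by_cases hab : a = b <;> simp [blockDiagonal_apply, hij, hab]

theorem charpoly_blockDiagonal [Fintype o] [DecidableEq o] (M : o → Matrix ι ι R) :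
    (blockDiagonal M).charpoly = ∏ j, (M j).charpoly := by
  rw [charpoly, charmatrix_blockDiagonal, det_blockDiagonal]
  rfl

theorem charpoly_fromBlocks_diagonal [Nontrivial R] (a b c d : ι → R) :
    (fromBlocks (diagonal a) (diagonal b) (diagonal c) (diagonal d)).charpoly =
      ∏ j, (X ^ 2 - C (a j + d j) * X + C (a j * d j - b j * c j)) := by
  rw [← charpoly_reindex (Equiv.sumSelfEquivFinTwoProd ι), reindex_fromBlocks_diagonal,
    charpoly_blockDiagonal]
  simp [charpoly_fin_two, trace_fin_two, det_fin_two]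

end Matrix

namespace Polynomial

variable {R : Type*} [CommRing R]

theorem X_sub_C_mul_X_sub_C (r t : R) :
    (X - C r) * (X - C t) = X ^ 2 - C (r + t) * X + C (r * t) := by
  simp only [C_add, C_mul]
  ring

theorem isRoot_X_sub_C_mul_X_sub_C [IsDomain R] {r t x : R} :
    ((X - C r) * (X - C t)).IsRoot x ↔ x = r ∨ x = t := by
  rw [root_mul, root_X_sub_C, root_X_sub_C, eq_comm, @eq_comm _ t]

end Polynomial

open Matrix

theorem map_quadratic_eq_prod_X_sub_C {Γ Ω : ℝ} (hΓ : Γ ≠ 0) (hΩ : Ω ≠ 0) (κ : ℝ) :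
    (X ^ 2 - C (Γ ^ 2 / (κ * Ω ^ 2)) * X + C (Γ ^ 2 / (κ ^ 2 * Ω ^ 2))).map (algebraMap ℝ ℂ) =
      (X - C (((Γ ^ 2 / (2 * κ * Ω ^ 2) : ℝ) : ℂ) *
          (1 + ((1 - 4 * Ω ^ 2 / Γ ^ 2 : ℝ) : ℂ) ^ (1 / 2 : ℂ)))) *
        (X - C (((Γ ^ 2 / (2 * κ * Ω ^ 2) : ℝ) : ℂ) *
          (1 - ((1 - 4 * Ω ^ 2 / Γ ^ 2 : ℝ) : ℂ) ^ (1 / 2 : ℂ)))) := by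
  set s : ℂ := ((1 - 4 * Ω ^ 2 / Γ ^ 2 : ℝ) : ℂ) ^ (1 / 2 : ℂ) with hs
  set a : ℂ := ((Γ ^ 2 / (2 * κ * Ω ^ 2) : ℝ) : ℂ) with ha
  have hsum : ((Γ ^ 2 / (κ * Ω ^ 2) : ℝ) : ℂ) = a * (1 + s) + a * (1 - s) := by
    rw [show a * (1 + s) + a * (1 - s) = 2 * a by ring, ha]
    push_cast
    ring
  have hprod : ((Γ ^ 2 / (κ ^ 2 * Ω ^ 2) : ℝ) : ℂ) = a * (1 + s) * (a * (1 - s)) := by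
    rw [← mul_mul_mul_comm, ← sq, ← sq_sub_sq, one_pow, hs, one_div,
      Complex.cpow_ofNat_inv_pow, ha]
    norm_cast
    field_simp
    ring
  rw [X_sub_C_mul_X_sub_C, ← hsum, ← hprod]
  simp only [Polynomial.map_add, Polynomial.map_sub, Polynomial.map_mul, Polynomial.map_pow,
    map_X, map_C, Complex.coe_algebraMap]

section Gamma

variable (m n : ℕ) (c : Fin m → ℝ) (k : Fin n → ℝ) (Γ Ω : ℝ)
  (g : Fin m → Fin n → (Fin m → ℝ) → ℝ) (y : Fin m → ℝ)

theorem gammaMat_eq_fromBlocks :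
    gammaMat m n c k Γ Ω g y =
      fromBlocks (diagonal fun i => 1 / c i) (of fun i => Sum.elim (fun j => -(g i j y / c i)) 0) 0
        (fromBlocks (diagonal 0) (diagonal fun j => -(Γ / Ω ^ 2) * (1 / k j))
          (diagonal fun j => Γ * (1 / k j)) (diagonal fun j => Γ ^ 2 / Ω ^ 2 * (1 / k j))) := by
  ext (i | i | i) (j | j | j) <;> simp [gammaMat, diagonal_apply]

theorem charpoly_gammaMat :
    (gammaMat m n c k Γ Ω g y).charpoly =
      (∏ i, (X - C (1 / c i))) *
        ∏ j, (X ^ 2 - C (Γ ^ 2 / (k j * Ω ^ 2)) * X + C (Γ ^ 2 / (k j ^ 2 * Ω ^ 2))) := by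
  rw [gammaMat_eq_fromBlocks, charpoly_fromBlocks_zero₂₁, charpoly_diagonal,
    charpoly_fromBlocks_diagonal]
  congr 1
  refine Finset.prod_congr rfl fun j _ => ?_
  congr 4 <;> simp only [Pi.zero_apply] <;> ring

theorem isRoot_map_charpoly_gammaMat (hΓ : Γ ≠ 0) (hΩ : Ω ≠ 0) (lam : ℂ) :
    ((gammaMat m n c k Γ Ω g y).charpoly.map (algebraMap ℝ ℂ)).IsRoot lam ↔
      ((∃ i, lam = 1 / ((c i : ℝ) : ℂ)) ∨
        ∃ j,
          lam = ((Γ ^ 2 / (2 * k j * Ω ^ 2) : ℝ) : ℂ) *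
              (1 + ((1 - 4 * Ω ^ 2 / Γ ^ 2 : ℝ) : ℂ) ^ (1 / 2 : ℂ)) ∨
          lam = ((Γ ^ 2 / (2 * k j * Ω ^ 2) : ℝ) : ℂ) *
              (1 - ((1 - 4 * Ω ^ 2 / Γ ^ 2 : ℝ) : ℂ) ^ (1 / 2 : ℂ))) := by
  rw [charpoly_gammaMat, Polynomial.map_mul, Polynomial.map_prod, Polynomial.map_prod, root_mul,
    isRoot_prod, isRoot_prod]
  simp only [map_quadratic_eq_prod_X_sub_C hΓ hΩ, isRoot_X_sub_C_mul_X_sub_C,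
    Polynomial.map_sub, map_X, map_C, root_X_sub_C, Finset.mem_univ, true_and,
    Complex.coe_algebraMap, Complex.ofReal_div, Complex.ofReal_one]
  simp only [eq_comm]

end Gamma

theorem statement3_general (m n : ℕ)
    (c : Fin m → ℝ) (k : Fin n → ℝ)
    (Γ Ω : ℝ) (hΓ : 0 < Γ) (hΩ : 0 < Ω)
    (g : Fin m → Fin n → (Fin m → ℝ) → ℝ) :
    ∀ X : (Fin m → ℝ) × (Fin n → ℝ) × (Fin n → ℝ),
      (gammaMat m n c k Γ Ω g X.1).charpoly =
          (∏ i : Fin m, (Polynomial.X - Polynomial.C (1 / c i))) *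
            ∏ j : Fin n,
              (Polynomial.X ^ 2 - Polynomial.C (Γ ^ 2 / (k j * Ω ^ 2)) * Polynomial.X +
                Polynomial.C (Γ ^ 2 / (k j ^ 2 * Ω ^ 2))) ∧
      ∀ lam : ℂ,
        (((gammaMat m n c k Γ Ω g X.1).charpoly).map (algebraMap ℝ ℂ)).IsRoot lam ↔
          ((∃ i, lam = 1 / ((c i : ℝ) : ℂ)) ∨
            ∃ j,
              lam = ((Γ ^ 2 / (2 * k j * Ω ^ 2) : ℝ) : ℂ) *
                  (1 + ((1 - 4 * Ω ^ 2 / Γ ^ 2 : ℝ) : ℂ) ^ (1 / 2 : ℂ)) ∨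
              lam = ((Γ ^ 2 / (2 * k j * Ω ^ 2) : ℝ) : ℂ) *
                  (1 - ((1 - 4 * Ω ^ 2 / Γ ^ 2 : ℝ) : ℂ) ^ (1 / 2 : ℂ))) := fun X =>
  ⟨charpoly_gammaMat m n c k Γ Ω g X.1,
    isRoot_map_charpoly_gammaMat m n c k Γ Ω g X.1 hΓ.ne' hΩ.ne'⟩

theorem statement3 (m n : ℕ) (hm : 0 < m) (hn : 0 < n)
    (c : Fin m → ℝ) (hc : ∀ i, 0 < c i) (k : Fin n → ℝ) (hk : ∀ j, 0 < k j)
    (Γ Ω : ℝ) (hΓ : 0 < Γ) (hΩ : 0 < Ω)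
    (g : Fin m → Fin n → (Fin m → ℝ) → ℝ)
    (hg_diff : ∀ i j, Differentiable ℝ (g i j))
    (hg_deriv_cont : ∀ i j, Continuous (fderiv ℝ (g i j)))
    (hg_bdd : ∀ i j, ∃ C, ∀ y, |g i j y| ≤ C)
    (hg_deriv_bdd : ∀ i j, ∃ C, ∀ y, ‖fderiv ℝ (g i j) y‖ ≤ C) :
    ∀ X : (Fin m → ℝ) × (Fin n → ℝ) × (Fin n → ℝ),
      (gammaMat m n c k Γ Ω g X.1).charpoly =
          (∏ i : Fin m, (Polynomial.X - Polynomial.C (1 / c i))) *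
            ∏ j : Fin n,
              (Polynomial.X ^ 2 - Polynomial.C (Γ ^ 2 / (k j * Ω ^ 2)) * Polynomial.X +
                Polynomial.C (Γ ^ 2 / (k j ^ 2 * Ω ^ 2))) ∧
      ∀ lam : ℂ,
        (((gammaMat m n c k Γ Ω g X.1).charpoly).map (algebraMap ℝ ℂ)).IsRoot lam ↔
          ((∃ i, lam = 1 / ((c i : ℝ) : ℂ)) ∨
            ∃ j,
              lam = ((Γ ^ 2 / (2 * k j * Ω ^ 2) : ℝ) : ℂ) *
                  (1 + ((1 - 4 * Ω ^ 2 / Γ ^ 2 : ℝ) : ℂ) ^ (1 / 2 : ℂ)) ∨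
              lam = ((Γ ^ 2 / (2 * k j * Ω ^ 2) : ℝ) : ℂ) *
                  (1 - ((1 - 4 * Ω ^ 2 / Γ ^ 2 : ℝ) : ℂ) ^ (1 / 2 : ℂ))) :=
  statement3_general m n c k Γ Ω hΓ hΩ g
end
end

section
/- For every X ∈ ℝ^m × ℝ^n × ℝ^n, every complex eigenvalue λ of γ(X) (i.e., every complex root of its characteristic polynomial) satisfies Re λ > 0. -/
open scoped Matrix.Norms.L2Operator

noncomputable section

/-!
`γ(X)` is block upper triangular, with diagonal blocks `D¹` and the `2n × 2n` matrix
`[[0, -(Γ/Ω²) D²], [Γ D², (Γ²/Ω²) D²]]`, whose four `n × n` blocks are diagonal. An eigenvalue of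
the latter therefore is an eigenvalue of one of the `2 × 2` matrices
`[[0, -Γ/(Ω² k_j)], [Γ/k_j, Γ²/(Ω² k_j)]]`, a root of `λ² - Tλ + D` with `T, D > 0`. Such a root
has positive real part: dividing by `λ` gives `Re λ · (1 + D/|λ|²) = T`. The remaining
eigenvalues are the numbers `1/c_i > 0`.
-/

namespace Matrix

variable {K m n : Type*} [Field K] [Fintype m] [Fintype n] [DecidableEq m] [DecidableEq n]

theorem spectrum_subset_union_of_toBlocks₂₁_eq_zero {M : Matrix (m ⊕ n) (m ⊕ n) K}
    (hM : M.toBlocks₂₁ = 0) :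
    spectrum K M ⊆ spectrum K M.toBlocks₁₁ ∪ spectrum K M.toBlocks₂₂ := by
  intro μ hμ
  rw [← fromBlocks_toBlocks M, hM, mem_spectrum_iff_isRoot_charpoly,
    charpoly_fromBlocks_zero₂₁, Polynomial.IsRoot, Polynomial.eval_mul, mul_eq_zero] at hμ
  simpa only [Set.mem_union, mem_spectrum_iff_isRoot_charpoly, Polynomial.IsRoot] using hμ

theorem exists_mulVec_eq_smul_of_mem_spectrum {A : Matrix n n K} {μ : K}
    (hμ : μ ∈ spectrum K A) : ∃ v ≠ 0, A *ᵥ v = μ • v := by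
  rw [← spectrum_toLin', ← Module.End.hasEigenvalue_iff_mem_spectrum] at hμ
  obtain ⟨v, hv⟩ := hμ.exists_hasEigenvector
  exact ⟨v, hv.2, by simpa using hv.apply_eq_smul⟩

theorem exists_mul_eq_of_mem_spectrum_fromBlocks_diagonal {a b c d : n → K} {μ : K}
    (hμ : μ ∈ spectrum K (fromBlocks (diagonal a) (diagonal b) (diagonal c) (diagonal d))) :
    ∃ j, (μ - a j) * (μ - d j) = b j * c j := by
  obtain ⟨v, hv0, hv⟩ := exists_mulVec_eq_smul_of_mem_spectrum hμ
  by_contra! hΔ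
  have row₁ (j : n) : a j * v (.inl j) + b j * v (.inr j) = μ * v (.inl j) := by
    simpa [fromBlocks_mulVec, mulVec_diagonal] using congrFun hv (.inl j)
  have row₂ (j : n) : c j * v (.inl j) + d j * v (.inr j) = μ * v (.inr j) := by
    simpa [fromBlocks_mulVec, mulVec_diagonal] using congrFun hv (.inr j)
  apply hv0
  have hΔ' (j : n) : (μ - a j) * (μ - d j) - b j * c j ≠ 0 := sub_ne_zero.2 (hΔ j)
  ext (j | j)
  · refine (mul_eq_zero.1 ?_).resolve_left (hΔ' j)
    linear_combination -(μ - d j) * row₁ j - b j * row₂ j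
  · refine (mul_eq_zero.1 ?_).resolve_left (hΔ' j)
    linear_combination -(μ - a j) * row₂ j - c j * row₁ j

end Matrix

namespace Complex

theorem re_pos_of_sq_sub_mul_add_eq_zero {T D : ℝ} (hT : 0 < T) (hD : 0 < D) {μ : ℂ}
    (h : μ ^ 2 - T * μ + D = 0) : 0 < μ.re := by
  have hμ : μ ≠ 0 := by
    rintro rfl
    simp [hD.ne'] at h
  have hsum : μ + D * μ⁻¹ = T := by
    field_simp
    linear_combination h
  have hre : μ.re * (1 + D / normSq μ) = T := by
    have := congrArg Complex.re hsum
    simp only [add_re, re_ofReal_mul, inv_re, ofReal_re] at this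
    linear_combination this
  have hfactor : 0 ≤ 1 + D / normSq μ := by
    have := div_nonneg hD.le (normSq_nonneg μ)
    linarith
  exact pos_of_mul_pos_left (hre ▸ hT) hfactor

end Complex

section gammaMat

variable {m n : ℕ} {c : Fin m → ℝ} {k : Fin n → ℝ} {Γ Ω : ℝ}
  {g : Fin m → Fin n → (Fin m → ℝ) → ℝ} {y : Fin m → ℝ}

open Matrix

theorem gammaMat_map_toBlocks₁₁ :
    ((gammaMat m n c k Γ Ω g y).map (algebraMap ℝ ℂ)).toBlocks₁₁ =
      diagonal fun i => ((1 / c i : ℝ) : ℂ) := by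
  ext i j
  by_cases h : i = j <;> simp [gammaMat, toBlocks₁₁, h]

theorem gammaMat_map_toBlocks₂₁ :
    ((gammaMat m n c k Γ Ω g y).map (algebraMap ℝ ℂ)).toBlocks₂₁ = 0 := by
  ext (i | i) j <;> simp [gammaMat, toBlocks₂₁]

theorem gammaMat_map_toBlocks₂₂ :
    ((gammaMat m n c k Γ Ω g y).map (algebraMap ℝ ℂ)).toBlocks₂₂ =
      fromBlocks (diagonal 0) (diagonal fun j => ((-(Γ / Ω ^ 2) * (1 / k j) : ℝ) : ℂ))
        (diagonal fun j => ((Γ * (1 / k j) : ℝ) : ℂ))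
        (diagonal fun j => ((Γ ^ 2 / Ω ^ 2 * (1 / k j) : ℝ) : ℂ)) := by
  ext (i | i) (j | j) <;> by_cases h : i = j <;> simp [gammaMat, toBlocks₂₂, h]

end gammaMat

theorem statement4_general (m n : ℕ)
    (c : Fin m → ℝ) (hc : ∀ i, 0 < c i) (k : Fin n → ℝ) (hk : ∀ j, 0 < k j)
    (Γ Ω : ℝ) (hΓ : 0 < Γ) (hΩ : 0 < Ω)
    (g : Fin m → Fin n → (Fin m → ℝ) → ℝ) :
    ∀ X : (Fin m → ℝ) × (Fin n → ℝ) × (Fin n → ℝ), ∀ lam : ℂ,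
      (((gammaMat m n c k Γ Ω g X.1).charpoly).map (algebraMap ℝ ℂ)).IsRoot lam →
        0 < lam.re := by
  intro X lam hroot
  have hspec : lam ∈ spectrum ℂ ((gammaMat m n c k Γ Ω g X.1).map (algebraMap ℝ ℂ)) := by
    rwa [Matrix.mem_spectrum_iff_isRoot_charpoly, Matrix.charpoly_map]
  rcases Matrix.spectrum_subset_union_of_toBlocks₂₁_eq_zero gammaMat_map_toBlocks₂₁ hspec with
    h | h
  · rw [gammaMat_map_toBlocks₁₁, spectrum_diagonal] at h
    obtain ⟨i, rfl⟩ := h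
    simpa using hc i
  · rw [gammaMat_map_toBlocks₂₂] at h
    obtain ⟨j, hj⟩ := Matrix.exists_mul_eq_of_mem_spectrum_fromBlocks_diagonal h
    have hkj := hk j
    refine Complex.re_pos_of_sq_sub_mul_add_eq_zero (T := Γ ^ 2 / Ω ^ 2 * (1 / k j))
      (D := Γ / Ω ^ 2 * (1 / k j) * (Γ * (1 / k j))) (by positivity) (by positivity) ?_
    push_cast [Pi.zero_apply] at hj ⊢
    linear_combination hj

theorem statement4 (m n : ℕ) (hm : 0 < m) (hn : 0 < n)
    (c : Fin m → ℝ) (hc : ∀ i, 0 < c i) (k : Fin n → ℝ) (hk : ∀ j, 0 < k j)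
    (Γ Ω : ℝ) (hΓ : 0 < Γ) (hΩ : 0 < Ω)
    (g : Fin m → Fin n → (Fin m → ℝ) → ℝ)
    (hg_diff : ∀ i j, Differentiable ℝ (g i j))
    (hg_deriv_cont : ∀ i j, Continuous (fderiv ℝ (g i j)))
    (hg_bdd : ∀ i j, ∃ C, ∀ y, |g i j y| ≤ C)
    (hg_deriv_bdd : ∀ i j, ∃ C, ∀ y, ‖fderiv ℝ (g i j) y‖ ≤ C) :
    ∀ X : (Fin m → ℝ) × (Fin n → ℝ) × (Fin n → ℝ), ∀ lam : ℂ,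
      (((gammaMat m n c k Γ Ω g X.1).charpoly).map (algebraMap ℝ ℂ)).IsRoot lam →
        0 < lam.re :=
  statement4_general m n c hc k hk Γ Ω hΓ hΩ g

end
end

section
/- There exist constants C > 0 and C_d > 0 (depending only on n, k_1, …, k_n, Γ, Ω) such that for every real s ≥ 0, ‖exp(−s A)‖ ≤ C e^{−C_d s}, where exp denotes the matrix exponential. Consequently, for every ε > 0 and all 0 ≤ t₀ ≤ t, the fundamental solution Φ_{t₀}(t) = exp(−((t−t₀)/ε) A) of the system Φ' = −(1/ε) A Φ with Φ_{t₀}(t₀) = I satisfies ‖Φ_{t₀}(t)‖ ≤ C exp(−C_d (t−t₀)/ε). -/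
/-!
Along `t ↦ exp (-t A) x` the system splits into `n` copies of the planar system
`u' = a d v`, `v' = -b d u - a b d v` with `a = Γ / Ω²`, `b = Γ`, `d = 1 / k_j`.
The Lyapunov function `V = ∑ⱼ (p uⱼ² + 2 uⱼ vⱼ + r vⱼ²)`, with `p a = 2 + a b` and `r b = 2` chosen
so that the cross terms cancel, is comparable to `‖x‖²` and satisfies
`V' = -2 ∑ⱼ dⱼ (b uⱼ² + a vⱼ²) ≤ -2 κ V`. Grönwall gives `V (t) ≤ e^{-2κt} V (0)`, hence
`‖exp (-t A)‖ ≤ √(L / μ) e^{-κt}` where `μ ‖x‖² ≤ V ≤ L ‖x‖²`.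
-/

open scoped Matrix.Norms.L2Operator

noncomputable section

/-- The `2n × 2n` block matrix `A = [[0, −(Γ/Ω²) D²], [Γ D², (Γ²/Ω²) D²]]`,
where `D²` is the diagonal matrix with entries `1/k_j`. -/
def Amat (n : ℕ) (k : Fin n → ℝ) (Γ Ω : ℝ) : Matrix (Fin n ⊕ Fin n) (Fin n ⊕ Fin n) ℝ :=
  Matrix.fromBlocks 0 ((-(Γ / Ω ^ 2)) • Matrix.diagonal fun j => 1 / k j)
    (Γ • Matrix.diagonal fun j => 1 / k j) ((Γ ^ 2 / Ω ^ 2) • Matrix.diagonal fun j => 1 / k j)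

open scoped RealInnerProductSpace
open Matrix

theorem le_mul_exp_of_hasDerivAt_le_mul {V V' : ℝ → ℝ} {K s : ℝ}
    (hV : ∀ t, HasDerivAt V (V' t) t) (hV' : ∀ t, V' t ≤ K * V t) (hs : 0 ≤ s) :
    V s ≤ V 0 * Real.exp (K * s) := by
  have h := le_gronwallBound_of_liminf_deriv_right_le (f := V) (δ := V 0) (ε := 0) (b := s)
    (fun t _ => (hV t).continuousAt.continuousWithinAt)
    (fun t _ _ hr => (hV t).hasDerivWithinAt.liminf_right_slope_le hr) le_rfl
    (fun t _ => by simpa using hV' t) s ⟨hs, le_rfl⟩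
  simpa [gronwallBound_ε0] using h

section Lyapunov

variable {E : Type*} [NormedAddCommGroup E] [InnerProductSpace ℝ E] [CompleteSpace E]

theorem norm_exp_smul_le_of_lyapunov (M P : E →L[ℝ] E) {μ L κ : ℝ} (hμ : 0 < μ)
    (hlow : ∀ x, μ * ‖x‖ ^ 2 ≤ ⟪x, P x⟫) (hup : ∀ x, ⟪x, P x⟫ ≤ L * ‖x‖ ^ 2)
    (hdecay : ∀ x, ⟪x, P (M x)⟫ + ⟪M x, P x⟫ ≤ -(2 * κ) * ⟪x, P x⟫) {s : ℝ} (hs : 0 ≤ s) :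
    ‖NormedSpace.exp (s • M)‖ ≤ √(L / μ) * Real.exp (-(κ * s)) := by
  refine ContinuousLinearMap.opNorm_le_bound _ (by positivity) fun x => ?_
  set y : ℝ → E := fun t => NormedSpace.exp (t • M) x
  have hy : ∀ t, HasDerivAt y (M (y t)) t := fun t => by
    simpa using (hasDerivAt_exp_smul_const' M t).clm_apply (hasDerivAt_const t x)
  have hV : ∀ t, HasDerivAt (fun t => ⟪y t, P (y t)⟫)
      (⟪y t, P (M (y t))⟫ + ⟪M (y t), P (y t)⟫) t := fun t =>
    (hy t).inner ℝ (P.hasFDerivAt.comp_hasDerivAt t (hy t))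
  have hVs : ⟪y s, P (y s)⟫ ≤ ⟪x, P x⟫ * Real.exp (-(κ * s)) ^ 2 := by
    rw [← Real.exp_nat_mul, show (2 : ℕ) * -(κ * s) = -(2 * κ) * s by push_cast; ring]
    simpa [y] using le_mul_exp_of_hasDerivAt_le_mul hV (fun t => hdecay (y t)) hs
  have hsq : ‖y s‖ ^ 2 ≤ L / μ * (Real.exp (-(κ * s)) * ‖x‖) ^ 2 := by
    rw [div_mul_eq_mul_div, le_div_iff₀' hμ]
    calc μ * ‖y s‖ ^ 2 ≤ ⟪x, P x⟫ * Real.exp (-(κ * s)) ^ 2 := (hlow _).trans hVs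
      _ ≤ L * ‖x‖ ^ 2 * Real.exp (-(κ * s)) ^ 2 := by gcongr; exact hup x
      _ = _ := by ring
  calc ‖y s‖ ≤ √(L / μ * (Real.exp (-(κ * s)) * ‖x‖) ^ 2) := Real.le_sqrt_of_sq_le hsq
    _ = √(L / μ) * Real.exp (-(κ * s)) * ‖x‖ := by
      rw [Real.sqrt_mul' _ (by positivity), Real.sqrt_sq (by positivity), mul_assoc]

end Lyapunov

section MatrixExp

variable {ι : Type*} [Fintype ι] [DecidableEq ι]

theorem Matrix.l2_opNorm_exp (A : Matrix ι ι ℝ) :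
    ‖NormedSpace.exp A‖ = ‖NormedSpace.exp (toEuclideanCLM (𝕜 := ℝ) A)‖ := by
  rw [← l2_opNorm_toEuclideanCLM, NormedSpace.map_exp_of_mem_ball (𝕂 := ℝ)]
  · exact AddMonoidHomClass.continuous_of_bound _ 1 fun B => by simp [l2_opNorm_toEuclideanCLM]
  · exact (NormedSpace.expSeries_radius_eq_top ℝ (Matrix ι ι ℝ)).symm ▸ edist_lt_top _ _

theorem Matrix.l2_opNorm_exp_smul_le_of_lyapunov (M P : Matrix ι ι ℝ) {μ L κ : ℝ} (hμ : 0 < μ)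
    (hlow : ∀ x, μ * (x ⬝ᵥ x) ≤ x ⬝ᵥ P *ᵥ x) (hup : ∀ x, x ⬝ᵥ P *ᵥ x ≤ L * (x ⬝ᵥ x))
    (hdecay : ∀ x, x ⬝ᵥ P *ᵥ (M *ᵥ x) + (M *ᵥ x) ⬝ᵥ P *ᵥ x ≤ -(2 * κ) * (x ⬝ᵥ P *ᵥ x))
    {s : ℝ} (hs : 0 ≤ s) :
    ‖NormedSpace.exp (s • M)‖ ≤ √(L / μ) * Real.exp (-(κ * s)) := by
  have hnorm (x : EuclideanSpace ℝ ι) : ‖x‖ ^ 2 = x.ofLp ⬝ᵥ x.ofLp := by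
    rw [← real_inner_self_eq_norm_sq, EuclideanSpace.inner_eq_star_dotProduct, star_trivial]
  rw [l2_opNorm_exp, map_smul]
  refine norm_exp_smul_le_of_lyapunov _ (toEuclideanCLM (𝕜 := ℝ) P) hμ (fun x => ?_)
    (fun x => ?_) (fun x => ?_) hs
  · simpa only [hnorm, inner_toEuclideanCLM] using hlow x.ofLp
  · simpa only [hnorm, inner_toEuclideanCLM] using hup x.ofLp
  · simpa only [inner_toEuclideanCLM, real_inner_comm, ofLp_toEuclideanCLM] using hdecay x.ofLp

end MatrixExp

theorem Finite.exists_pos_forall_le {α : Type*} [Finite α] {d : α → ℝ} (hd : ∀ i, 0 < d i) :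
    ∃ δ > 0, ∀ i, δ ≤ d i := by
  cases isEmpty_or_nonempty α
  · exact ⟨1, one_pos, isEmptyElim⟩
  · obtain ⟨i₀, hi₀⟩ := Finite.exists_min d
    exact ⟨d i₀, hd i₀, hi₀⟩

section BlockSystem

variable {n : ℕ}

def blockMat (a b : ℝ) (d : Fin n → ℝ) : Matrix (Fin n ⊕ Fin n) (Fin n ⊕ Fin n) ℝ :=
  fromBlocks 0 ((-a) • diagonal d) (b • diagonal d) ((a * b) • diagonal d)

theorem Amat_eq_blockMat (k : Fin n → ℝ) (Γ Ω : ℝ) :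
    Amat n k Γ Ω = blockMat (Γ / Ω ^ 2) Γ (fun j => 1 / k j) := by
  rw [Amat, blockMat, div_mul_eq_mul_div, ← sq]

def lyapunovMat (a b : ℝ) : Matrix (Fin n ⊕ Fin n) (Fin n ⊕ Fin n) ℝ :=
  fromBlocks (((2 + a * b) / a) • 1) 1 1 ((2 / b) • 1)

theorem dotProduct_self_eq_sum (x : Fin n ⊕ Fin n → ℝ) :
    x ⬝ᵥ x = ∑ j, (x (.inl j) ^ 2 + x (.inr j) ^ 2) := by
  simp only [dotProduct, Fintype.sum_sum_type, Finset.sum_add_distrib, sq]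

theorem dotProduct_lyapunovMat_mulVec (a b : ℝ) (x : Fin n ⊕ Fin n → ℝ) :
    x ⬝ᵥ lyapunovMat a b *ᵥ x = ∑ j, ((2 + a * b) / a * x (.inl j) ^ 2
      + 2 * x (.inl j) * x (.inr j) + 2 / b * x (.inr j) ^ 2) := by
  simp only [lyapunovMat, fromBlocks_mulVec, dotProduct, Fintype.sum_sum_type, Sum.elim_inl,
    Sum.elim_inr, Pi.add_apply, smul_mulVec, one_mulVec, Pi.smul_apply, Function.comp_apply,
    smul_eq_mul, ← Finset.sum_add_distrib]
  exact Finset.sum_congr rfl fun j _ => by ring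

theorem lyapunovMat_derivative {a b : ℝ} (ha : a ≠ 0) (hb : b ≠ 0) (d : Fin n → ℝ)
    (x : Fin n ⊕ Fin n → ℝ) :
    x ⬝ᵥ lyapunovMat a b *ᵥ (-blockMat a b d *ᵥ x) + (-blockMat a b d *ᵥ x) ⬝ᵥ lyapunovMat a b *ᵥ x
      = -2 * ∑ j, d j * (b * x (.inl j) ^ 2 + a * x (.inr j) ^ 2) := by
  simp only [lyapunovMat, blockMat, fromBlocks_neg, fromBlocks_mulVec, dotProduct,
    Fintype.sum_sum_type, Sum.elim_inl, Sum.elim_inr, Pi.add_apply, smul_mulVec, one_mulVec,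
    Pi.smul_apply, Function.comp_apply, smul_eq_mul, neg_zero, zero_mulVec, mulVec_diagonal,
    Pi.zero_apply, ← neg_smul, ← Finset.sum_add_distrib, Finset.mul_sum]
  refine Finset.sum_congr rfl fun j _ => ?_
  field_simp
  ring

theorem lyapunov_quadratic_lower {a b : ℝ} (ha : 0 < a) (hb : 0 < b) (u v : ℝ) :
    min (2 / a) (1 / b) * (u ^ 2 + v ^ 2) ≤ (2 + a * b) / a * u ^ 2 + 2 * u * v + 2 / b * v ^ 2 :=
  calc min (2 / a) (1 / b) * (u ^ 2 + v ^ 2) ≤ 2 / a * u ^ 2 + 1 / b * v ^ 2 := by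
        rw [mul_add]; gcongr; exacts [min_le_left _ _, min_le_right _ _]
    _ ≤ 2 / a * u ^ 2 + 1 / b * v ^ 2 + (b * u + v) ^ 2 / b := le_add_of_nonneg_right (by positivity)
    _ = (2 + a * b) / a * u ^ 2 + 2 * u * v + 2 / b * v ^ 2 := by field_simp; ring

theorem lyapunov_quadratic_upper {a b : ℝ} (ha : 0 < a) (hb : 0 < b) (u v : ℝ) :
    (2 + a * b) / a * u ^ 2 + 2 * u * v + 2 / b * v ^ 2 ≤
      ((2 + a * b) / a + 2 / b + 1) * (u ^ 2 + v ^ 2) := by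
  have hp : 0 ≤ (2 + a * b) / a := by positivity
  have hr : 0 ≤ 2 / b := by positivity
  nlinarith [mul_nonneg hp (sq_nonneg v), mul_nonneg hr (sq_nonneg u), sq_nonneg (u - v)]

theorem exists_norm_exp_neg_smul_blockMat_le {a b δ : ℝ} (ha : 0 < a) (hb : 0 < b) (hδ : 0 < δ)
    {d : Fin n → ℝ} (hd : ∀ j, δ ≤ d j) :
    ∃ C > (0 : ℝ), ∃ Cd > (0 : ℝ), ∀ s : ℝ, 0 ≤ s →
      ‖NormedSpace.exp (-(s • blockMat a b d))‖ ≤ C * Real.exp (-(Cd * s)) := by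
  set μ := min (2 / a) (1 / b)
  set L := (2 + a * b) / a + 2 / b + 1
  set m := min a b
  have hμ : 0 < μ := by positivity
  have hL : 0 < L := by positivity
  have hm : 0 < m := lt_min ha hb
  have hup (x : Fin n ⊕ Fin n → ℝ) : x ⬝ᵥ lyapunovMat a b *ᵥ x ≤ L * (x ⬝ᵥ x) := by
    rw [dotProduct_self_eq_sum, dotProduct_lyapunovMat_mulVec, Finset.mul_sum]
    exact Finset.sum_le_sum fun j _ => lyapunov_quadratic_upper ha hb _ _
  have hdissip (x : Fin n ⊕ Fin n → ℝ) :
      δ * m * (x ⬝ᵥ x) ≤ ∑ j, d j * (b * x (.inl j) ^ 2 + a * x (.inr j) ^ 2) := by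
    rw [dotProduct_self_eq_sum, Finset.mul_sum]
    refine Finset.sum_le_sum fun j _ => ?_
    have hab : m * (x (.inl j) ^ 2 + x (.inr j) ^ 2) ≤ b * x (.inl j) ^ 2 + a * x (.inr j) ^ 2 := by
      rw [mul_add]; gcongr; exacts [min_le_right _ _, min_le_left _ _]
    rw [mul_assoc]
    exact mul_le_mul (hd j) hab (by positivity) (hδ.le.trans (hd j))
  refine ⟨√(L / μ), by positivity, δ * m / L, by positivity, fun s hs => ?_⟩
  rw [← smul_neg]
  refine l2_opNorm_exp_smul_le_of_lyapunov _ (lyapunovMat a b) hμ (fun x => ?_) hup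
    (fun x => ?_) hs
  · rw [dotProduct_self_eq_sum, dotProduct_lyapunovMat_mulVec, Finset.mul_sum]
    exact Finset.sum_le_sum fun j _ => lyapunov_quadratic_lower ha hb _ _
  · rw [lyapunovMat_derivative ha.ne' hb.ne']
    calc -2 * ∑ j, d j * (b * x (.inl j) ^ 2 + a * x (.inr j) ^ 2)
        ≤ -(2 * (δ * m / L)) * (L * (x ⬝ᵥ x)) := by
          rw [show -(2 * (δ * m / L)) * (L * (x ⬝ᵥ x)) = -2 * (δ * m * (x ⬝ᵥ x)) by
            field_simp]
          linarith [hdissip x]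
      _ ≤ -(2 * (δ * m / L)) * (x ⬝ᵥ lyapunovMat a b *ᵥ x) :=
          mul_le_mul_of_nonpos_left (hup x) (by simp only [neg_nonpos]; positivity)

end BlockSystem

theorem statement6_general (n : ℕ) (k : Fin n → ℝ) (hk : ∀ j, 0 < k j)
    (Γ Ω : ℝ) (hΓ : 0 < Γ) (hΩ : 0 < Ω) :
    ∃ C > (0:ℝ), ∃ Cd > (0:ℝ),
      (∀ s : ℝ, 0 ≤ s →
        ‖NormedSpace.exp (-(s • Amat n k Γ Ω))‖ ≤ C * Real.exp (-(Cd * s))) ∧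
      ∀ ε : ℝ, 0 < ε → ∀ t₀ t : ℝ, 0 ≤ t₀ → t₀ ≤ t →
        ‖NormedSpace.exp (-(((t - t₀) / ε) • Amat n k Γ Ω))‖ ≤
          C * Real.exp (-(Cd * (t - t₀) / ε)) := by
  obtain ⟨δ, hδ, hd⟩ := Finite.exists_pos_forall_le fun j => one_div_pos.mpr (hk j)
  obtain ⟨C, hC, Cd, hCd, hbound⟩ :=
    exists_norm_exp_neg_smul_blockMat_le (by positivity : 0 < Γ / Ω ^ 2) hΓ hδ hd
  rw [← Amat_eq_blockMat] at hbound
  refine ⟨C, hC, Cd, hCd, hbound, fun ε hε t₀ t _ ht => ?_⟩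
  rw [mul_div_assoc]
  exact hbound _ (div_nonneg (sub_nonneg.mpr ht) hε.le)

theorem statement6 (n : ℕ) (hn : 0 < n) (k : Fin n → ℝ) (hk : ∀ j, 0 < k j)
    (Γ Ω : ℝ) (hΓ : 0 < Γ) (hΩ : 0 < Ω) :
    ∃ C > (0:ℝ), ∃ Cd > (0:ℝ),
      (∀ s : ℝ, 0 ≤ s →
        ‖NormedSpace.exp (-(s • Amat n k Γ Ω))‖ ≤ C * Real.exp (-(Cd * s))) ∧
      ∀ ε : ℝ, 0 < ε → ∀ t₀ t : ℝ, 0 ≤ t₀ → t₀ ≤ t →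
        ‖NormedSpace.exp (-(((t - t₀) / ε) • Amat n k Γ Ω))‖ ≤
          C * Real.exp (-(Cd * (t - t₀) / ε)) :=
  statement6_general n k hk Γ Ω hΓ hΩ
end
end

section
/- Let ε > 0, C₄ ≥ 0, and let t₀ ≤ T be real numbers. Let J : [t₀, T] → M_m(ℝ) be continuous with ‖J(t)‖ ≤ C₄ for all t ∈ [t₀, T], and let u : [t₀, T] → ℝ^m be differentiable with u'(t) = (−(1/ε) D¹ + J(t)) u(t) for all t ∈ [t₀, T]. Then, with c = max(c_1, …, c_m), for every t ∈ [t₀, T], ‖u(t)‖ ≤ ‖u(t₀)‖ · exp((C₄ − 1/(c ε)) (t − t₀)). -/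
open scoped Matrix.Norms.L2Operator

noncomputable section

/-!
The matrix `-(1/ε) D¹ + J(t)` is dissipative with rate `C₄ - 1/(c ε)`: its quadratic form is at
most `(C₄ - 1/(c ε)) ‖x‖²`, since `D¹ ≥ 1/c` entrywise and `⟪x, J x⟫ ≤ ‖J‖ ‖x‖²`. Hence
`d/dt ‖u‖² = 2 ⟪u, u'⟫ ≤ 2 (C₄ - 1/(c ε)) ‖u‖²`, and Gronwall's inequality for `‖u‖²` gives the
bound after taking square roots.
-/

open Set Real
open scoped RealInnerProductSpace

/-- Gronwall's inequality when only the radial part `⟪f, f'⟫` of the derivative is controlled. -/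
theorem norm_le_mul_exp_of_inner_deriv_le {E : Type*} [NormedAddCommGroup E]
    [InnerProductSpace ℝ E] {f f' : ℝ → E} {K a b : ℝ}
    (hf : ∀ t ∈ Icc a b, HasDerivWithinAt f (f' t) (Icc a b) t)
    (bound : ∀ t ∈ Ico a b, ⟪f t, f' t⟫ ≤ K * ‖f t‖ ^ 2) :
    ∀ t ∈ Icc a b, ‖f t‖ ≤ ‖f a‖ * exp (K * (t - a)) := by
  have hcont : ContinuousOn f (Icc a b) := fun t ht => (hf t ht).continuousWithinAt
  have hderiv_sq : ∀ t ∈ Ico a b,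
      HasDerivWithinAt (‖f ·‖ ^ 2) (2 * ⟪f t, f' t⟫) (Ici t) t := fun t ht =>
    ((hf t (Ico_subset_Icc_self ht)).mono_of_mem_nhdsWithin
      (Filter.mem_of_superset (Icc_mem_nhdsGE ht.2) (Icc_subset_Icc_left ht.1))).norm_sq
  have hsq := le_gronwallBound_of_liminf_deriv_right_le (f := (‖f ·‖ ^ 2)) (K := 2 * K) (ε := 0)
    (hcont.norm.pow 2)
    (fun t ht _ hr => (hderiv_sq t ht).liminf_right_slope_le hr) le_rfl
    (fun t ht => by linarith [bound t ht])
  intro t ht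
  refine le_of_pow_le_pow_left₀ two_ne_zero (by positivity) ?_
  calc ‖f t‖ ^ 2 ≤ ‖f a‖ ^ 2 * exp (2 * K * (t - a)) := by
        simpa only [gronwallBound_ε0] using hsq t ht
    _ = (‖f a‖ * exp (K * (t - a))) ^ 2 := by
        rw [mul_pow, ← exp_nat_mul]; ring_nf

theorem real_inner_apply_self_le_opNorm_mul_sq {E : Type*} [NormedAddCommGroup E]
    [InnerProductSpace ℝ E] (T : E →L[ℝ] E) (x : E) : ⟪x, T x⟫ ≤ ‖T‖ * ‖x‖ ^ 2 :=
  calc ⟪x, T x⟫ ≤ ‖x‖ * ‖T x‖ := real_inner_le_norm _ _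
    _ ≤ ‖x‖ * (‖T‖ * ‖x‖) := by gcongr; exact T.le_opNorm x
    _ = ‖T‖ * ‖x‖ ^ 2 := by ring

namespace Matrix

variable {n : Type*} [Fintype n] [DecidableEq n]

theorem mul_norm_sq_le_inner_toEuclideanCLM_diagonal {d : n → ℝ} {δ : ℝ} (hd : ∀ i, δ ≤ d i)
    (x : EuclideanSpace ℝ n) :
    δ * ‖x‖ ^ 2 ≤ ⟪x, toEuclideanCLM (𝕜 := ℝ) (diagonal d) x⟫ := by
  rw [inner_toEuclideanCLM, EuclideanSpace.real_norm_sq_eq, Finset.mul_sum]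
  simp only [dotProduct, mulVec_diagonal]
  refine Finset.sum_le_sum fun i _ => ?_
  nlinarith [hd i, sq_nonneg (x i)]

end Matrix

theorem statement7_general (m : ℕ)
    (c : Fin m → ℝ) (hc : ∀ i, 0 < c i)
    (cm : ℝ) (hcm : IsGreatest (Set.range c) cm)
    (ε C₄ t₀ T : ℝ) (hε : 0 < ε)
    (J : ℝ → Matrix (Fin m) (Fin m) ℝ)
    (hJbdd : ∀ t ∈ Set.Icc t₀ T, ‖J t‖ ≤ C₄)
    (u : ℝ → EuclideanSpace ℝ (Fin m))
    (hu : ∀ t ∈ Set.Icc t₀ T,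
      HasDerivWithinAt u
        (Matrix.toEuclideanCLM (𝕜 := ℝ)
          ((-(1 / ε)) • Matrix.diagonal (fun i => 1 / c i) + J t) (u t))
        (Set.Icc t₀ T) t) :
    ∀ t ∈ Set.Icc t₀ T,
      ‖u t‖ ≤ ‖u t₀‖ * Real.exp ((C₄ - 1 / (cm * ε)) * (t - t₀)) := by
  obtain ⟨i₀, rfl⟩ := hcm.1
  have hdiag : ∀ i, 1 / c i₀ ≤ 1 / c i := fun i => one_div_le_one_div_of_le (hc i) (hcm.2 ⟨i, rfl⟩)
  refine norm_le_mul_exp_of_inner_deriv_le hu fun t ht => ?_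
  have hD := Matrix.mul_norm_sq_le_inner_toEuclideanCLM_diagonal hdiag (u t)
  have hJ := real_inner_apply_self_le_opNorm_mul_sq (Matrix.toEuclideanCLM (𝕜 := ℝ) (J t)) (u t)
  have hJt := hJbdd t (Ico_subset_Icc_self ht)
  rw [map_add, map_smul, add_apply, smul_apply, inner_add_right, real_inner_smul_right]
  calc -(1 / ε) * ⟪u t, _⟫ + ⟪u t, _⟫
      ≤ -(1 / ε) * (1 / c i₀ * ‖u t‖ ^ 2) + C₄ * ‖u t‖ ^ 2 := by
        gcongr ?_ + ?_
        · exact mul_le_mul_of_nonpos_left hD (by simp [hε.le])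
        · exact hJ.trans (by gcongr; exact hJt)
    _ = (C₄ - 1 / (c i₀ * ε)) * ‖u t‖ ^ 2 := by field_simp; ring

theorem statement7 (m : ℕ) (hm : 0 < m)
    (c : Fin m → ℝ) (hc : ∀ i, 0 < c i)
    (cm : ℝ) (hcm : IsGreatest (Set.range c) cm)
    (ε C₄ t₀ T : ℝ) (hε : 0 < ε) (hC₄ : 0 ≤ C₄) (ht₀T : t₀ ≤ T)
    (J : ℝ → Matrix (Fin m) (Fin m) ℝ)
    (hJcont : ContinuousOn J (Set.Icc t₀ T))
    (hJbdd : ∀ t ∈ Set.Icc t₀ T, ‖J t‖ ≤ C₄)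
    (u : ℝ → EuclideanSpace ℝ (Fin m))
    (hu : ∀ t ∈ Set.Icc t₀ T,
      HasDerivWithinAt u
        (Matrix.toEuclideanCLM (𝕜 := ℝ)
          ((-(1 / ε)) • Matrix.diagonal (fun i => 1 / c i) + J t) (u t))
        (Set.Icc t₀ T) t) :
    ∀ t ∈ Set.Icc t₀ T,
      ‖u t‖ ≤ ‖u t₀‖ * Real.exp ((C₄ - 1 / (cm * ε)) * (t - t₀)) :=
  statement7_general m c hc cm hcm ε C₄ t₀ T hε J hJbdd u hu
end
end
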